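/- The polynomial P₃(x₁,…,x₁₀) = (1/24)(2x₂x₆x₉ + 2x₅x₈x₁₀ − x₁x₅x₈x₁₀ − x₂x₅x₈x₁₀ − x₂x₆x₈x₁₀ − x₂x₆x₉x₁₀) satisfies P₃(0, ε, 0, 0, 0, ε, 0, ε, 0, ε) = −ε⁴/24 < 0 for every ε > 0; hence P₃ takes negative values on every hypercube [0,ε]¹⁰ with ε > 0. -/

import Mathlib

/-- Step polynomial `P₃` of the classical RK4 method applied to upwind advection. -/
noncomputable def P3 (x1 x2 x3 x4 x5 x6 x7 x8 x9 x10 : ℝ) : ℝ :=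
  (1/24) * (2*x2*x6*x9 + 2*x5*x8*x10 - x1*x5*x8*x10 - x2*x5*x8*x10
    - x2*x6*x8*x10 - x2*x6*x9*x10)

/-- On this vertex only the monomial `x₂x₆x₈x₁₀` survives. -/
theorem P3_vertex_eq (ε : ℝ) : P3 0 ε 0 0 0 ε 0 ε 0 ε = -ε^4/24 := by
  unfold P3
  ring

theorem rk4_P3_negative (ε : ℝ) (hε : 0 < ε) :
    P3 0 ε 0 0 0 ε 0 ε 0 ε = -ε^4/24 ∧ -ε^4/24 < 0 ∧
    (0:ℝ) ∈ Set.Icc 0 ε ∧ ε ∈ Set.Icc 0 ε := by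
  refine ⟨P3_vertex_eq ε, ?_, ⟨le_rfl, hε.le⟩, ⟨hε.le, le_rfl⟩⟩
  have := pow_pos hε 4
  linarith
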